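/- For any starting digit d ∉ {1,2,4,6} and any n ≥ 2, the n-th term of the look-and-say-again sequence with seed d has the form k ∥ dd, where k is a digit string all of whose runs have base digit in {1,2,4,6} and run length in {2,4,6}, and the digit d does not occur in k. -/

import Mathlib

/-- Run-length encoding of a digit string (a list of digits). -/
def rle : List ℕ → List (ℕ × ℕ)
  | [] => []
  | a :: t =>
    match rle t with
    | [] => [(a, 1)]
    | (b, n) :: r => if a = b then (a, n + 1) :: r else (a, 1) :: (b, n) :: r

/-- `P` is a run-length representation of the digit string `S`:
multiplicities are positive, adjacent base digits are distinct, and `S` is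
the concatenation of the runs. -/
def IsRLE (S : List ℕ) (P : List (ℕ × ℕ)) : Prop :=
  (∀ p ∈ P, 1 ≤ p.2) ∧ List.Chain' (fun p q => p.1 ≠ q.1) P ∧
    S = (P.map fun p => List.replicate p.2 p.1).flatten

/-- The look-and-say-again step: each run `a^n` is read off as `n n a a`. -/
def lsa (T : List ℕ) : List ℕ := (rle T).flatMap fun p => [p.2, p.2, p.1, p.1]

/-- Property `P`: every run has base digit in `{1,2,4,6}` and length in `{2,4,6}`. -/
def propP (T : List ℕ) : Prop :=
  ∀ p ∈ rle T, p.1 ∈ ({1, 2, 4, 6} : Set ℕ) ∧ p.2 ∈ ({2, 4, 6} : Set ℕ)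

/-!
Reading a run `a^n` as `n n a a` doubles every letter of the ordinary look-and-say reading
`n a`, so `lsa T` is the letter-doubling of `lookAndSay T`, and its runs are those of
`lookAndSay T` with doubled lengths. If `T = k ‖ dd` with `k` satisfying `P`, then `d` does
not occur in `k`, so `lookAndSay T = lookAndSay k ‖ 2 d` and
`lsa T = doubled (lookAndSay k ‖ 2) ‖ dd`. All letters of `lookAndSay k ‖ 2` lie in
`{1,2,4,6}`, and none occurs four times in a row: any four consecutive letters of
`n₁ a₁ n₂ a₂ … nₘ aₘ 2` contain two consecutive base digits `aᵢ, aᵢ₊₁`, which differ.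
Hence the runs of `doubled (lookAndSay k ‖ 2)` have length 2, 4 or 6, and the shape
propagates from `T₁ = 11dd`.
-/

theorem isRLE_rle (S : List ℕ) : IsRLE S (rle S) := by
  induction S with
  | nil => exact ⟨by simp [rle], List.isChain_nil, rfl⟩
  | cons a t ih =>
    obtain ⟨hpos, hchain, ht⟩ := ih
    unfold rle
    split
    · next hnil =>
      rw [hnil] at ht
      subst ht
      exact ⟨by simp, List.isChain_singleton _, by simp⟩
    · next b n r hbr =>
      rw [hbr] at hpos hchain ht
      split_ifs with hab
      · subst hab
        exact ⟨List.forall_mem_cons.2 ⟨by omega, (List.forall_mem_cons.1 hpos).2⟩,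
          List.isChain_cons.2 (List.isChain_cons.1 hchain), by simp [ht, List.replicate_succ]⟩
      · exact ⟨by simpa using hpos, List.isChain_cons_cons.2 ⟨hab, hchain⟩, by simp [ht]⟩

theorem rle_replicate_append {a n : ℕ} {L : List ℕ} (hn : 0 < n)
    (h : ∀ q ∈ (rle L).head?, q.1 ≠ a) :
    rle (List.replicate n a ++ L) = (a, n) :: rle L := by
  induction n, hn using Nat.le_induction with
  | base =>
    show rle (a :: L) = _
    rw [rle.eq_2]
    split
    · next hnil => rw [hnil]
    · next b m r hbr =>
      rw [hbr] at h ⊢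
      simp only [List.head?_cons, Option.mem_def, Option.some.injEq, forall_eq'] at h
      rw [if_neg (Ne.symm h)]
  | succ n hn ih =>
    show rle (a :: (List.replicate n a ++ L)) = _
    rw [rle.eq_2, ih]
    simp

theorem rle_eq_of_isRLE {S : List ℕ} {P : List (ℕ × ℕ)} (h : IsRLE S P) : rle S = P := by
  obtain ⟨hpos, hchain, rfl⟩ := h
  induction P with
  | nil => rfl
  | cons p t ih =>
    have ht : rle (t.map fun p => List.replicate p.2 p.1).flatten = t :=
      ih (fun q hq => hpos q (List.mem_cons_of_mem _ hq)) hchain.tail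
    have hhead : ∀ q ∈ t.head?, q.1 ≠ p.1 := by
      cases t with
      | nil => simp
      | cons q t => simpa using Ne.symm (List.isChain_cons_cons.1 hchain).1
    rw [List.map_cons, List.flatten_cons,
      rle_replicate_append (hpos p List.mem_cons_self) (by rwa [ht]), ht]

theorem rle_append_replicate {S : List ℕ} {a n : ℕ} (hn : 0 < n)
    (ha : ∀ p ∈ rle S, p.1 ≠ a) :
    rle (S ++ List.replicate n a) = rle S ++ [(a, n)] := by
  obtain ⟨hpos, hchain, hS⟩ := isRLE_rle S
  refine rle_eq_of_isRLE ⟨?_, ?_, ?_⟩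
  · intro p hp
    rcases List.mem_append.1 hp with hp | hp
    · exact hpos p hp
    · rw [List.mem_singleton.1 hp]
      exact hn
  · refine List.isChain_append.2 ⟨hchain, List.isChain_singleton _, ?_⟩
    intro p hp q hq
    simp only [List.head?_cons, Option.mem_def, Option.some.injEq] at hq
    subst hq
    exact ha p (List.mem_of_mem_getLast? hp)
  · conv_lhs => rw [hS]
    simp

theorem replicate_infix_of_mem_rle {S : List ℕ} {p : ℕ × ℕ} (hp : p ∈ rle S) :
    List.replicate p.2 p.1 <:+: S := by
  obtain ⟨-, -, hS⟩ := isRLE_rle S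
  rw [hS]
  exact List.infix_of_mem_flatten (List.mem_map_of_mem hp)

theorem mem_of_mem_rle {S : List ℕ} {p : ℕ × ℕ} (hp : p ∈ rle S) : p.1 ∈ S := by
  obtain ⟨hpos, -, -⟩ := isRLE_rle S
  refine (replicate_infix_of_mem_rle hp).subset ?_
  exact List.mem_replicate.2 ⟨by have := hpos p hp; omega, rfl⟩

def doubled (L : List ℕ) : List ℕ := L.flatMap fun x => [x, x]

theorem doubled_append (L M : List ℕ) : doubled (L ++ M) = doubled L ++ doubled M :=
  List.flatMap_append

theorem doubled_replicate (n a : ℕ) :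
    doubled (List.replicate n a) = List.replicate (2 * n) a := by
  induction n with
  | zero => rfl
  | succ n ih =>
    rw [List.replicate_succ, doubled, List.flatMap_cons, ← doubled, ih,
      show 2 * (n + 1) = 2 + 2 * n by ring, List.replicate_add]
    rfl

theorem doubled_flatten (L : List (List ℕ)) : doubled L.flatten = (L.map doubled).flatten := by
  induction L with
  | nil => rfl
  | cons l L ih => rw [List.flatten_cons, doubled_append, ih, List.map_cons, List.flatten_cons]

theorem rle_doubled (S : List ℕ) : rle (doubled S) = (rle S).map fun p => (p.1, 2 * p.2) := by
  obtain ⟨hpos, hchain, hS⟩ := isRLE_rle S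
  refine rle_eq_of_isRLE ⟨?_, List.isChain_map _ |>.2 hchain, ?_⟩
  · simp only [List.mem_map]
    rintro _ ⟨p, hp, rfl⟩
    have := hpos p hp
    simp only
    omega
  · conv_lhs => rw [hS]
    simp [doubled_flatten, Function.comp_def, doubled_replicate]

theorem exists_mem_rle_of_mem {S : List ℕ} {x : ℕ} (hx : x ∈ S) :
    ∃ p ∈ rle S, p.1 = x := by
  obtain ⟨-, -, hS⟩ := isRLE_rle S
  rw [hS] at hx
  obtain ⟨l, hl, hx⟩ := List.mem_flatten.1 hx
  obtain ⟨p, hp, rfl⟩ := List.mem_map.1 hl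
  exact ⟨p, hp, (List.eq_of_mem_replicate hx).symm⟩

theorem not_mem_of_propP {k : List ℕ} {d : ℕ} (hk : propP k)
    (hd : d ∉ ({1, 2, 4, 6} : Set ℕ)) : d ∉ k := fun hdk => by
  obtain ⟨p, hp, rfl⟩ := exists_mem_rle_of_mem hdk
  exact hd (hk p hp).1

theorem propP_doubled {s : List ℕ} (hs : ∀ x ∈ s, x ∈ ({1, 2, 4, 6} : Set ℕ))
    (h4 : ∀ x, ¬ List.replicate 4 x <:+: s) : propP (doubled s) := by
  intro q hq
  rw [rle_doubled, List.mem_map] at hq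
  obtain ⟨p, hp, rfl⟩ := hq
  refine ⟨hs p.1 (mem_of_mem_rle hp), ?_⟩
  have hpos := (isRLE_rle s).1 p hp
  have hle : p.2 < 4 := by
    by_contra! hge
    refine h4 p.1 (List.IsInfix.trans ?_ (replicate_infix_of_mem_rle hp))
    rw [← Nat.add_sub_cancel' hge, List.replicate_add]
    exact (List.prefix_append _ _).isInfix
  simp only [Set.mem_insert_iff, Set.mem_singleton_iff]
  omega

def lookAndSay (T : List ℕ) : List ℕ := (rle T).flatMap fun p => [p.2, p.1]

theorem lsa_eq_doubled_lookAndSay (T : List ℕ) : lsa T = doubled (lookAndSay T) := by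
  unfold lsa lookAndSay
  induction rle T with
  | nil => rfl
  | cons p R ih => rw [List.flatMap_cons, List.flatMap_cons, doubled_append, ← ih]; rfl

theorem not_replicate_four_infix_flatMap_append :
    ∀ R : List (ℕ × ℕ), List.IsChain (fun p q => p.1 ≠ q.1) R → ∀ c x : ℕ,
      ¬ List.replicate 4 x <:+: (R.flatMap fun p => [p.2, p.1]) ++ [c]
  | [], _, c, x, h => by simpa using h.length_le
  | [p], _, c, x, h => by simpa using h.length_le
  | p :: q :: t, hR, c, x, h => by
    have hpq : p.1 ≠ q.1 := (List.isChain_cons_cons.1 hR).1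
    have ih := not_replicate_four_infix_flatMap_append (q :: t) hR.tail c x
    simp only [List.flatMap_cons, List.cons_append, List.nil_append, List.infix_cons_iff,
      List.replicate_succ, List.replicate_zero, List.cons_prefix_cons] at h ih
    grind

theorem lookAndSay_append_pair {k : List ℕ} {d : ℕ} (hd : ∀ p ∈ rle k, p.1 ≠ d) :
    lookAndSay (k ++ [d, d]) = lookAndSay k ++ [2, d] := by
  rw [lookAndSay, show [d, d] = List.replicate 2 d from rfl, rle_append_replicate two_pos hd,
    List.flatMap_append]
  rfl

theorem mem_lookAndSay_of_propP {k : List ℕ} (hk : propP k) {x : ℕ} (hx : x ∈ lookAndSay k) :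
    x ∈ ({1, 2, 4, 6} : Set ℕ) := by
  obtain ⟨p, hp, hx⟩ := List.mem_flatMap.1 hx
  obtain ⟨hdigit, hlen⟩ := hk p hp
  simp only [List.mem_cons, List.not_mem_nil, or_false] at hx
  simp only [Set.mem_insert_iff, Set.mem_singleton_iff] at hdigit hlen ⊢
  omega

theorem exists_lsa_append_pair {k : List ℕ} {d : ℕ} (hk : propP k)
    (hd : d ∉ ({1, 2, 4, 6} : Set ℕ)) :
    ∃ k' : List ℕ, lsa (k ++ [d, d]) = k' ++ [d, d] ∧ propP k' := by
  have hne : ∀ p ∈ rle k, p.1 ≠ d := fun p hp h => hd (h ▸ (hk p hp).1)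
  refine ⟨doubled (lookAndSay k ++ [2]), ?_, propP_doubled ?_ ?_⟩
  · rw [lsa_eq_doubled_lookAndSay, lookAndSay_append_pair hne,
      show [2, d] = [2] ++ [d] from rfl, ← List.append_assoc, doubled_append]
    rfl
  · intro x hx
    rcases List.mem_append.1 hx with hx | hx
    · exact mem_lookAndSay_of_propP hk hx
    · simp [List.mem_singleton.1 hx]
  · exact not_replicate_four_infix_flatMap_append _ (isRLE_rle k).2.1 2

theorem lsa_seq_shape_general (d : ℕ) (hd : d ∉ ({1, 2, 4, 6} : Set ℕ)) :
    ∀ n : ℕ, 2 ≤ n → ∃ k : List ℕ, lsa^[n] [d] = k ++ [d, d] ∧ propP k ∧ d ∉ k := by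
  have shape : ∀ n, ∃ k : List ℕ, lsa^[n + 1] [d] = k ++ [d, d] ∧ propP k := by
    intro n
    induction n with
    | zero => exact ⟨[1, 1], by simp [lsa, rle], by simp [propP, rle]⟩
    | succ n ih =>
      obtain ⟨k, hk, hP⟩ := ih
      rw [Function.iterate_succ_apply', hk]
      exact exists_lsa_append_pair hP hd
  intro n hn
  obtain ⟨k, hk, hP⟩ := shape (n - 1)
  rw [Nat.sub_add_cancel (by omega)] at hk
  exact ⟨k, hk, hP, not_mem_of_propP hP hd⟩

/-- For a seed `d ∉ {1,2,4,6}` every term from index 2 on has the form `k ‖ dd`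
with `k` satisfying property `P` and not containing `d`. -/
theorem lsa_seq_shape (d : ℕ) (hd9 : d ≤ 9) (hd : d ∉ ({1, 2, 4, 6} : Set ℕ)) :
    ∀ n : ℕ, 2 ≤ n → ∃ k : List ℕ, lsa^[n] [d] = k ++ [d, d] ∧ propP k ∧ d ∉ k :=
  lsa_seq_shape_general d hd
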